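/- Let K be a field, ν a valuation on K[x] with trivial support, K̄ an algebraic closure of K, and μ an extension of ν to K̄[x]. Let f ∈ K[x] be monic with roots a_1, …, a_n ∈ K̄ (with multiplicity), let I(f) = {i : μ(x−a_i) = δ(f)} and r = |I(f)|. Then ν(∂_r f) = Σ_{i ∉ I(f)} μ(x−a_i), and consequently ν(f) − ν(∂_r f) = r·δ(f). -/

import Mathlib

open Polynomial

section KeyPolyDefs

variable {K : Type*} [Field K] {Γ : Type*} [AddCommGroup Γ] [LinearOrder Γ] [IsOrderedAddMonoid Γ]

/-- The value `ν f` read in `Γ` (junk value `0` when `ν f = ⊤`). -/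
noncomputable def aval (ν : AddValuation (Polynomial K) (WithTop Γ)) (f : Polynomial K) : Γ :=
  WithTop.untopD 0 (ν f)

/-- `ν` has trivial support: only `0` has value `⊤`. -/
def TrivialSupport (ν : AddValuation (Polynomial K) (WithTop Γ)) : Prop :=
  ∀ f : Polynomial K, ν f = ⊤ → f = 0

/-- The set of indices `r`, `1 ≤ r ≤ deg f` with `∂_r f ≠ 0`, over which `ε(f)` is computed. -/
noncomputable def epsSupport (f : Polynomial K) : Finset ℕ :=
  @Finset.filter _ (fun r => f.hasseDeriv r ≠ 0) (Classical.decPred _) (Finset.Icc 1 f.natDegree)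

/-- `ε(f) = max_{r ≥ 1} (ν f - ν ∂_r f) / r`, computed in the divisible group `Γ`. -/
noncomputable def eps [Module ℚ Γ] (ν : AddValuation (Polynomial K) (WithTop Γ))
    (f : Polynomial K) : Γ :=
  if h : (epsSupport f).Nonempty then
    (epsSupport f).sup' h fun r => ((r : ℚ)⁻¹) • (aval ν f - aval ν (f.hasseDeriv r))
  else 0

/-- `Q` is a key polynomial for `ν`: `Q` is monic and every `f` with `ε(f) ≥ ε(Q)` satisfies
`deg f ≥ deg Q`. -/
def IsKeyPoly [Module ℚ Γ] (ν : AddValuation (Polynomial K) (WithTop Γ))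
    (Q : Polynomial K) : Prop :=
  Q.Monic ∧ 0 < Q.natDegree ∧
    ∀ f : Polynomial K, 0 < f.natDegree → eps ν Q ≤ eps ν f → Q.natDegree ≤ f.natDegree

/-- The `i`-th coefficient of the `q`-expansion of a polynomial. -/
noncomputable def qCoeff (q : Polynomial K) : ℕ → Polynomial K → Polynomial K
  | 0, p => p % q
  | n + 1, p => qCoeff q n (p / q)

/-- The `q`-truncation `ν_q` of `ν`:  `ν_q(p) = min_i ν(p_i q^i)` where `p = Σ p_i q^i`
is the `q`-expansion of `p`. -/
noncomputable def trunc (ν : AddValuation (Polynomial K) (WithTop Γ)) (q p : Polynomial K) :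
    WithTop Γ :=
  (Finset.range (p.natDegree + 1)).inf fun i => ν (qCoeff q i p * q ^ i)

variable {L : Type*} [Field L] [Algebra K L]

/-- `δ(f)`: the maximal value `μ(x - a)` over the roots `a` of `f` in `L`
(junk value `0` if `f` has no roots in `L`). -/
noncomputable def delta (μ : AddValuation (Polynomial L) (WithTop Γ)) (f : Polynomial K) : Γ :=
  letI := Classical.decEq L
  if h : ((f.map (algebraMap K L)).roots.toFinset).Nonempty then
    ((f.map (algebraMap K L)).roots.toFinset).sup' h fun a => aval μ (X - C a)
  else 0

/-- `μ` on `L[x]` extends `ν` on `K[x]`. -/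
def IsExtension (μ : AddValuation (Polynomial L) (WithTop Γ))
    (ν : AddValuation (Polynomial K) (WithTop Γ)) : Prop :=
  ∀ f : Polynomial K, μ (f.map (algebraMap K L)) = ν f

/-- `w` on `K(x)` extends `ν` on `K[x]`. -/
def ExtendsToRatFunc (w : AddValuation (RatFunc K) (WithTop Γ))
    (ν : AddValuation (Polynomial K) (WithTop Γ)) : Prop :=
  ∀ p : Polynomial K, w (algebraMap (Polynomial K) (RatFunc K) p) = ν p

/-- The residue of `f` is transcendental over the residue field `Kν`:  every polynomial with
coefficients in the valuation ring of `K`, at least one of which is a unit, keeps value `0`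
when evaluated at `f`. -/
def ResidueTranscendentalElem (w : AddValuation (RatFunc K) (WithTop Γ)) (f : RatFunc K) : Prop :=
  ∀ (n : ℕ) (c : ℕ → K),
    (∀ i ≤ n, 0 ≤ w (algebraMap K (RatFunc K) (c i))) →
    (∃ i ≤ n, w (algebraMap K (RatFunc K) (c i)) = 0) →
    w (∑ i ∈ Finset.range (n + 1), algebraMap K (RatFunc K) (c i) * f ^ i) = 0

/-- The residue of `g` is algebraic over the residue field `Kν`: some polynomial with
coefficients in the valuation ring of `K`, at least one of which is a unit, gets positive
value when evaluated at `g`. -/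
def ResidueAlgebraicElem (w : AddValuation (RatFunc K) (WithTop Γ)) (g : RatFunc K) : Prop :=
  ∃ (n : ℕ) (c : ℕ → K),
    (∀ i ≤ n, 0 ≤ w (algebraMap K (RatFunc K) (c i))) ∧
    (∃ i ≤ n, w (algebraMap K (RatFunc K) (c i)) = 0) ∧
    0 < w (∑ i ∈ Finset.range (n + 1), algebraMap K (RatFunc K) (c i) * g ^ i)

/-- `w` is residue-transcendental: some `f` with `w f = 0` has transcendental residue. -/
def IsResidueTranscendental (w : AddValuation (RatFunc K) (WithTop Γ)) : Prop :=
  ∃ f : RatFunc K, w f = 0 ∧ ResidueTranscendentalElem w f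

/-- `w` is value-transcendental: some value `w f` is torsion-free over the value group
`νK` of `K`, i.e. `n ν(f) ∉ νK` for every `n ≥ 1`. -/
def IsValueTranscendental (w : AddValuation (RatFunc K) (WithTop Γ)) : Prop :=
  ∃ f : RatFunc K, f ≠ 0 ∧
    ∀ n : ℕ, 0 < n → ∀ c : K, c ≠ 0 → w (f ^ n) ≠ w (algebraMap K (RatFunc K) c)

/-- `w` is valuation-transcendental: it is value-transcendental or residue-transcendental. -/
def IsValuationTranscendental (w : AddValuation (RatFunc K) (WithTop Γ)) : Prop :=
  IsValueTranscendental w ∨ IsResidueTranscendental w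

end KeyPolyDefs

section MinimalPairDefs

variable {Γ : Type*} [AddCommGroup Γ] [LinearOrder Γ] [IsOrderedAddMonoid Γ] {L : Type*} [Field L]

/-- `(a, d)` is a minimal pair for the valuation (w.r.t. the extension `μ` to `L[x]`):
every `b` with `μ(b - a) ≥ d` satisfies `[K(b) : K] ≥ [K(a) : K]`. -/
def IsMinimalPair (K : Type*) [Field K] [Algebra K L]
    (μ : AddValuation (Polynomial L) (WithTop Γ)) (a : L) (d : Γ) : Prop :=
  ∀ b : L, (d : WithTop Γ) ≤ μ (C (b - a)) →
    (minpoly K a).natDegree ≤ (minpoly K b).natDegree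

/-- `(a, d)` is a minimal pair of definition: a minimal pair with `μ(x - a) = d ≥ μ(x - b)`
for every `b ∈ L`. -/
def IsMinimalPairOfDefinition (K : Type*) [Field K] [Algebra K L]
    (μ : AddValuation (Polynomial L) (WithTop Γ)) (a : L) (d : Γ) : Prop :=
  IsMinimalPair K μ a d ∧ μ (X - C a) = (d : WithTop Γ) ∧
    ∀ b : L, μ (X - C b) ≤ (d : WithTop Γ)

end MinimalPairDefs

/-! Over `L` the polynomial `f` splits as `∏ (X - aᵢ)`, and `∂_r f` is the sum, over the
`r`-subsets `T` of the roots, of the products of the remaining factors. Since every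
`μ(X - aᵢ)` is at most `δ(f)`, with equality exactly on `I`, for `r = #I` the term omitting
precisely the factors indexed by `I` has strictly smaller value than every other term, so it
alone determines `μ(∂_r f)`. Subtracting this value from `μ(f) = ∑ μ(X - aᵢ)` leaves
`∑_{i ∈ I} δ(f) = r δ(f)`. -/

namespace Polynomial

theorem hasseDeriv_map {R S : Type*} [Semiring R] [Semiring S] (φ : R →+* S) (k : ℕ)
    (p : R[X]) : (p.hasseDeriv k).map φ = (p.map φ).hasseDeriv k := by
  ext n
  simp [hasseDeriv_coeff, coeff_map]

theorem hasseDeriv_succ_X_sub_C_mul {R : Type*} [CommRing R] (c : R) (p : R[X]) (m : ℕ) :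
    hasseDeriv (m + 1) ((X - C c) * p) = (X - C c) * hasseDeriv (m + 1) p + hasseDeriv m p := by
  have hvanish : ∀ i ∈ Finset.range (m + 2), i ∉ Finset.range 2 →
      hasseDeriv i (X - C c) * hasseDeriv (m + 1 - i) p = 0 := fun i _ hi => by
    rw [hasseDeriv_eq_zero_of_lt_natDegree _ _
      ((natDegree_X_sub_C_le c).trans_lt (by simpa using hi)), zero_mul]
  rw [hasseDeriv_mul, Finset.Nat.sum_antidiagonal_eq_sum_range_succ_mk,
    ← Finset.sum_subset (Finset.range_subset_range.2 (by omega)) hvanish,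
    Finset.sum_range_succ, Finset.sum_range_one]
  simp

theorem hasseDeriv_prod_X_sub_C {R : Type*} [CommRing R] {ι : Type*} [DecidableEq ι]
    (a : ι → R) (s : Finset ι) (r : ℕ) :
    hasseDeriv r (∏ i ∈ s, (X - C (a i))) =
      ∑ T ∈ s.powersetCard r, ∏ i ∈ s \ T, (X - C (a i)) := by
  induction s using Finset.induction generalizing r with
  | empty => cases r <;> simp [hasseDeriv_apply_one]
  | @insert j s hj ih =>
    cases r with
    | zero => simp
    | succ m =>
      have hj_notMem : ∀ {k}, ∀ T ∈ s.powersetCard k, j ∉ T := fun T hT hjT =>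
        hj ((Finset.mem_powersetCard.1 hT).1 hjT)
      rw [Finset.prod_insert hj, hasseDeriv_succ_X_sub_C_mul, ih, ih,
        Finset.powersetCard_succ_insert hj, Finset.sum_union, Finset.mul_sum, Finset.sum_image]
      · congr 1
        · refine Finset.sum_congr rfl fun T hT => ?_
          rw [Finset.insert_sdiff_of_notMem _ (hj_notMem T hT), Finset.prod_insert (by simp [hj])]
        · refine Finset.sum_congr rfl fun T hT => ?_
          rw [Finset.insert_sdiff_insert, Finset.sdiff_insert_of_notMem hj]
      · intro T hT U hU hTU
        simpa [hj_notMem T hT, hj_notMem U hU] using congrArg (Finset.erase · j) hTU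
      · refine Finset.disjoint_left.2 fun T hT hT' => ?_
        obtain ⟨U, -, rfl⟩ := Finset.mem_image.1 hT'
        exact hj_notMem _ hT (Finset.mem_insert_self j U)

end Polynomial

theorem Finset.sum_lt_sum_of_card_eq {ι M : Type*} [AddCommMonoid M] [PartialOrder M]
    [IsOrderedCancelAddMonoid M] {v : ι → M} {δ : M} {I T : Finset ι}
    (hI : ∀ i ∈ I, v i = δ) (hT : ∀ i ∈ T, i ∉ I → v i < δ)
    (hcard : T.card = I.card) (hne : T ≠ I) :
    ∑ i ∈ T, v i < ∑ i ∈ I, v i := by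
  classical
  have hcard_sdiff : (T \ I).card = (I \ T).card := by
    have hT := Finset.card_sdiff_add_card_inter T I
    have hI := Finset.card_sdiff_add_card_inter I T
    rw [Finset.inter_comm] at hI
    omega
  have hnonempty : (T \ I).Nonempty :=
    Finset.sdiff_nonempty.2 fun hTI => hne (Finset.eq_of_subset_of_card_le hTI hcard.ge)
  have hlt : ∑ i ∈ T \ I, v i < ∑ i ∈ I \ T, v i := calc
    ∑ i ∈ T \ I, v i < ∑ _i ∈ T \ I, δ := Finset.sum_lt_sum_of_nonempty hnonempty
      fun i hi => hT i (Finset.mem_sdiff.1 hi).1 (Finset.mem_sdiff.1 hi).2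
    _ = ∑ i ∈ I \ T, v i := by
      rw [Finset.sum_const, hcard_sdiff, ← Finset.sum_const]
      exact Finset.sum_congr rfl fun i hi => (hI i (Finset.mem_sdiff.1 hi).1).symm
  rw [← Finset.sum_inter_add_sum_sdiff T I, ← Finset.sum_inter_add_sum_sdiff I T,
    Finset.inter_comm]
  exact add_lt_add_right hlt _

namespace AddValuation

variable {R : Type*} [CommRing R]

theorem map_prod {Γ₀ : Type*} [LinearOrderedAddCommMonoidWithTop Γ₀] (v : AddValuation R Γ₀)
    {ι : Type*} (s : Finset ι) (g : ι → R) : v (∏ i ∈ s, g i) = ∑ i ∈ s, v (g i) := by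
  classical
  induction s using Finset.induction with
  | empty => simp
  | insert j s hj ih => rw [Finset.prod_insert hj, Finset.sum_insert hj, v.map_mul, ih]

theorem map_sum_eq_of_lt {Γ₀ : Type*} [LinearOrderedAddCommMonoidWithTop Γ₀]
    (v : AddValuation R Γ₀) {ι : Type*} {s : Finset ι} {g : ι → R} {j : ι} (hj : j ∈ s)
    (hfin : v (g j) ≠ ⊤) (hlt : ∀ i ∈ s, i ≠ j → v (g j) < v (g i)) :
    v (∑ i ∈ s, g i) = v (g j) := by
  classical
  rw [← Finset.add_sum_erase _ _ hj]
  exact v.map_add_eq_of_lt_left <| v.map_lt_sum hfin fun i hi =>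
    hlt i (Finset.mem_of_mem_erase hi) (Finset.ne_of_mem_erase hi)

variable {Γ : Type*} [AddCommGroup Γ] [LinearOrder Γ] [IsOrderedAddMonoid Γ]

theorem map_hasseDeriv_prod_X_sub_C {ι : Type*} [Fintype ι] [DecidableEq ι]
    (μ : AddValuation R[X] (WithTop Γ)) (a : ι → R) {v : ι → Γ}
    (hv : ∀ i, μ (X - C (a i)) = v i) {δ : Γ} (hle : ∀ i, v i ≤ δ) {I : Finset ι}
    (hI : ∀ i, i ∈ I ↔ v i = δ) :
    μ (hasseDeriv I.card (∏ i, (X - C (a i)))) = ↑(∑ i ∈ Iᶜ, v i) := by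
  have hterm : ∀ T : Finset ι, μ (∏ i ∈ Finset.univ \ T, (X - C (a i))) = ↑(∑ i ∈ Tᶜ, v i) :=
    fun T => by simp only [μ.map_prod, hv, WithTop.coe_sum, Finset.compl_eq_univ_sdiff]
  rw [Polynomial.hasseDeriv_prod_X_sub_C,
    μ.map_sum_eq_of_lt (Finset.mem_powersetCard_univ.2 rfl) (by simp [hterm]), hterm]
  intro T hT hTI
  rw [hterm, hterm, WithTop.coe_lt_coe]
  have hsum : ∑ i ∈ T, v i < ∑ i ∈ I, v i :=
    Finset.sum_lt_sum_of_card_eq (fun i hi => (hI i).1 hi)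
      (fun i _ hiI => (hle i).lt_of_ne fun h => hiI ((hI i).2 h))
      (Finset.mem_powersetCard_univ.1 hT) hTI
  refine lt_of_add_lt_add_right (a := ∑ i ∈ T, v i) ?_
  calc ∑ i ∈ Iᶜ, v i + ∑ i ∈ T, v i < ∑ i ∈ Iᶜ, v i + ∑ i ∈ I, v i := add_lt_add_right hsum _
    _ = ∑ i ∈ Tᶜ, v i + ∑ i ∈ T, v i := by rw [Finset.sum_compl_add_sum, Finset.sum_compl_add_sum]

end AddValuation

section Delta

variable {K : Type*} [Field K] {Γ : Type*} [AddCommGroup Γ] [LinearOrder Γ] [IsOrderedAddMonoid Γ]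

theorem aval_eq_of_eq_coe {ν : AddValuation K[X] (WithTop Γ)} {f : K[X]} {γ : Γ}
    (h : ν f = γ) : aval ν f = γ := by
  rw [aval, h, WithTop.untopD_coe]

theorem coe_aval_of_ne_top {ν : AddValuation K[X] (WithTop Γ)} {f : K[X]} (h : ν f ≠ ⊤) :
    ((aval ν f : Γ) : WithTop Γ) = ν f := by
  obtain ⟨γ, hγ⟩ := WithTop.ne_top_iff_exists.1 h
  rw [aval_eq_of_eq_coe hγ.symm, hγ]

theorem aval_le_delta {L : Type*} [Field L] [Algebra K L] (μ : AddValuation L[X] (WithTop Γ))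
    {f : K[X]} {b : L} (hb : b ∈ (f.map (algebraMap K L)).roots) :
    aval μ (X - C b) ≤ delta μ f := by
  classical
  have hmem : b ∈ (f.map (algebraMap K L)).roots.toFinset := Multiset.mem_toFinset.2 hb
  rw [delta, dif_pos ⟨b, hmem⟩]
  convert Finset.le_sup' (fun c => aval μ (X - C c)) hmem

end Delta

theorem hasseDeriv_value_at_card_max_roots_general {K : Type*} [Field K] {Γ : Type*}
    [AddCommGroup Γ] [LinearOrder Γ] [IsOrderedAddMonoid Γ]
    {L : Type*} [Field L] [Algebra K L]
    (ν : AddValuation (Polynomial K) (WithTop Γ)) (μ : AddValuation (Polynomial L) (WithTop Γ))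
    (hμ : TrivialSupport μ) (hext : IsExtension μ ν)
    (f : Polynomial K)
    (n : ℕ) (a : Fin n → L)
    (hfact : f.map (algebraMap K L) = ∏ i, (X - C (a i)))
    (I : Finset (Fin n)) (hI : ∀ i, i ∈ I ↔ aval μ (X - C (a i)) = delta μ f) :
    aval ν (f.hasseDeriv I.card) = ∑ i ∈ Iᶜ, aval μ (X - C (a i)) ∧
      aval ν f - aval ν (f.hasseDeriv I.card) = I.card • delta μ f := by
  have hv : ∀ i, μ (X - C (a i)) = aval μ (X - C (a i)) := fun i =>
    (coe_aval_of_ne_top fun h => X_sub_C_ne_zero (a i) (hμ _ h)).symm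
  have hroot : ∀ i, a i ∈ (f.map (algebraMap K L)).roots := fun i => by
    rw [hfact, mem_roots (monic_prod_of_monic _ _ fun j _ => monic_X_sub_C (a j)).ne_zero,
      IsRoot, eval_prod]
    exact Finset.prod_eq_zero (Finset.mem_univ i) (by simp)
  have hderiv : aval ν (f.hasseDeriv I.card) = ∑ i ∈ Iᶜ, aval μ (X - C (a i)) := by
    refine aval_eq_of_eq_coe ?_
    rw [← hext, hasseDeriv_map, hfact]
    exact μ.map_hasseDeriv_prod_X_sub_C a hv (fun i => aval_le_delta μ (hroot i)) hI
  have hf : aval ν f = ∑ i, aval μ (X - C (a i)) := by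
    refine aval_eq_of_eq_coe ?_
    rw [← hext, hfact, μ.map_prod]
    simp only [hv, WithTop.coe_sum]
  refine ⟨hderiv, ?_⟩
  rw [hf, hderiv, ← Finset.sum_compl_add_sum I, add_sub_cancel_left,
    Finset.sum_congr rfl fun i hi => (hI i).1 hi, Finset.sum_const]

/-- Let `f ∈ K[x]` be monic with roots `a_1, …, a_n ∈ K̄` (with
multiplicity), let `I = {i : μ(x - a_i) = δ(f)}` and `r = |I|`. Then
`ν(∂_r f) = Σ_{i ∉ I} μ(x - a_i)` and `ν(f) - ν(∂_r f) = r·δ(f)`. -/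
theorem hasseDeriv_value_at_card_max_roots {K : Type*} [Field K] {Γ : Type*}
    [AddCommGroup Γ] [LinearOrder Γ] [IsOrderedAddMonoid Γ]
    {L : Type*} [Field L] [Algebra K L] [IsAlgClosure K L]
    (ν : AddValuation (Polynomial K) (WithTop Γ)) (μ : AddValuation (Polynomial L) (WithTop Γ))
    (hν : TrivialSupport ν) (hμ : TrivialSupport μ) (hext : IsExtension μ ν)
    (f : Polynomial K) (hf : f.Monic) (hdeg : 0 < f.natDegree)
    (n : ℕ) (a : Fin n → L)
    (hfact : f.map (algebraMap K L) = ∏ i, (X - C (a i)))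
    (I : Finset (Fin n)) (hI : ∀ i, i ∈ I ↔ aval μ (X - C (a i)) = delta μ f) :
    aval ν (f.hasseDeriv I.card) = ∑ i ∈ Iᶜ, aval μ (X - C (a i)) ∧
      aval ν f - aval ν (f.hasseDeriv I.card) = I.card • delta μ f :=
  hasseDeriv_value_at_card_max_roots_general ν μ hμ hext f n a hfact I hI
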